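/- If a word w has no run at all in an NBW A (the reduced split tree of A on w is eventually the empty slice ⊥), then in the improved slice-based construction the run s₀s₁⋯s_{i-1}⊥^ω, following the undecorated evolution δ_u until reaching ⊥, is an accepting run of the complement automaton A' on w; hence w ∈ L(A'). -/

import Mathlib

/-- A nondeterministic Büchi automaton. -/
structure NBW (A Q : Type*) where
  init : Q
  trans : Q → A → Set Q
  acc : Set Q

def NBW.IsRun {A Q : Type*} (M : NBW A Q) (w : ℕ → A) (ρ : ℕ → Q) : Prop :=
  ρ 0 = M.init ∧ ∀ i, ρ (i + 1) ∈ M.trans (ρ i) (w i)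

def NBW.Accepting {A Q : Type*} (M : NBW A Q) (ρ : ℕ → Q) : Prop :=
  ∃ q ∈ M.acc, ∀ N, ∃ i ≥ N, ρ i = q

def NBW.Lang {A Q : Type*} (M : NBW A Q) : Set (ℕ → A) :=
  {w | ∃ ρ, M.IsRun w ρ ∧ M.Accepting ρ}


/-- Decorations of slice nodes. -/
inductive Dec | zero | star | one
deriving DecidableEq

/-- A decorated slice: a sequence of sets of states with decorations. -/
abbrev DSlice (Q : Type*) := List (Set Q × Dec)

/-- Two adjacent decorations are mergible iff equal and in `{0, *}`. -/
def mergibleB (d e : Dec) : Bool :=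
  decide (d = e) && (decide (d = Dec.zero) || decide (d = Dec.star))

/-- `merge`: recursively merge all adjacent mergible nodes. -/
def dmerge {Q : Type*} : DSlice Q → DSlice Q
  | [] => []
  | [x] => [x]
  | x :: y :: rest =>
    if mergibleB x.2 y.2 then dmerge ((x.1 ∪ y.1, x.2) :: rest)
    else x :: dmerge (y :: rest)
termination_by s => s.length

/-- Merge as many as possible but at most `j` merging operations at the front
(so at most `j + 1` consecutive nodes get merged into one). -/
def mergeFront {Q : Type*} : ℕ → DSlice Q → DSlice Q
  | 0, s => s
  | _ + 1, [] => []
  | _ + 1, [x] => [x]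
  | j + 1, x :: y :: rest =>
    if mergibleB x.2 y.2 then mergeFront j ((x.1 ∪ y.1, x.2) :: rest) else x :: y :: rest

/-- The positions of the mergible pairs of adjacent nodes, left to right. -/
def mergiblePos {Q : Type*} (s : DSlice Q) : List ℕ :=
  (List.range s.length).filter fun k =>
    match s[k]?, s[k + 1]? with
    | some x, some y => mergibleB x.2 y.2
    | _, _ => false

/-- `merge_{i,j}`: merge as many as possible and at most `j` consecutive
mergible nodes, starting from the `i`-th (1-indexed) mergible pair. -/
def mergeIJ {Q : Type*} (i j : ℕ) (s : DSlice Q) : DSlice Q :=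
  match (mergiblePos s)[i - 1]? with
  | none => s
  | some k => s.take k ++ mergeFront (j - 1) (s.drop k)

/-- A (decorated) slice is a reset slice iff no node is decorated `0`. -/
def isResetB {Q : Type*} (s : DSlice Q) : Bool := s.all fun x => !(decide (x.2 = Dec.zero))

/-- A slice is doomed iff no node is decorated `1`. -/
def Doomed {Q : Type*} (s : DSlice Q) : Prop := ∀ x ∈ s, x.2 ≠ Dec.one

/-- Decorations of the (left, right) children of a `d`-decorated node,
depending on whether the current slice is a reset slice. -/
def decPair (reset : Bool) (d : Dec) : Dec × Dec :=
  if reset then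
    match d with
    | Dec.one => (Dec.zero, Dec.one)
    | _ => (Dec.zero, Dec.zero)
  else
    match d with
    | Dec.one => (Dec.star, Dec.one)
    | d => (d, d)

/-- One step of decorated-slice evolution, before deletion of empty nodes. -/
def ddAux {A Q : Type*} (δ : Q → A → Set Q) (F : Set Q) (a : A) (reset : Bool) :
    DSlice Q → Set Q → DSlice Q
  | [], _ => []
  | (Qi, d) :: rest, seen =>
    ((((⋃ q ∈ Qi, δ q a) ∩ F) \ seen), (decPair reset d).1) ::
    ((((⋃ q ∈ Qi, δ q a) \ F) \ seen), (decPair reset d).2) ::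
      ddAux δ F a reset rest
        (seen ∪ ((((⋃ q ∈ Qi, δ q a) ∩ F) \ seen)) ∪ (((⋃ q ∈ Qi, δ q a) \ F) \ seen))

/-- The deterministic decorated-successor function `δ_d'` of the improved
slice-based construction: split nodes, decorate children, delete empty nodes. -/
noncomputable def ddSucc {A Q : Type*} (δ : Q → A → Set Q) (F : Set Q)
    (s : DSlice Q) (a : A) : DSlice Q :=
  (ddAux δ F a (isResetB s) s ∅).filter fun x => @decide x.1.Nonempty (Classical.propDecidable _)

/-- One step of undecorated-slice evolution, before deletion of empty nodes. -/
def duAux {A Q : Type*} (δ : Q → A → Set Q) (F : Set Q) (a : A) :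
    List (Set Q) → Set Q → List (Set Q)
  | [], _ => []
  | Qi :: rest, seen =>
    ((((⋃ q ∈ Qi, δ q a) ∩ F) \ seen)) :: (((⋃ q ∈ Qi, δ q a) \ F) \ seen) ::
      duAux δ F a rest
        (seen ∪ ((((⋃ q ∈ Qi, δ q a) ∩ F) \ seen)) ∪ (((⋃ q ∈ Qi, δ q a) \ F) \ seen))

/-- The undecorated-slice evolution `δ_u`: split nodes and delete empty nodes. -/
noncomputable def duSucc {A Q : Type*} (δ : Q → A → Set Q) (F : Set Q)
    (s : List (Set Q)) (a : A) : List (Set Q) :=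
  (duAux δ F a s ∅).filter fun S => @decide S.Nonempty (Classical.propDecidable _)

/-- One step of the guessing transition, before deletion of empty nodes:
left (accepting) children are decorated `0`, right children `1`. -/
def dgAux {A Q : Type*} (δ : Q → A → Set Q) (F : Set Q) (a : A) :
    List (Set Q) → Set Q → DSlice Q
  | [], _ => []
  | Qi :: rest, seen =>
    ((((⋃ q ∈ Qi, δ q a) ∩ F) \ seen), Dec.zero) ::
    ((((⋃ q ∈ Qi, δ q a) \ F) \ seen), Dec.one) ::
      dgAux δ F a rest
        (seen ∪ ((((⋃ q ∈ Qi, δ q a) ∩ F) \ seen)) ∪ (((⋃ q ∈ Qi, δ q a) \ F) \ seen))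

/-- The deterministic guessing function `δ_g'` of the improved construction. -/
noncomputable def dgSucc {A Q : Type*} (δ : Q → A → Set Q) (F : Set Q)
    (s : List (Set Q)) (a : A) : DSlice Q :=
  (dgAux δ F a s ∅).filter fun x => @decide x.1.Nonempty (Classical.propDecidable _)

/-- The improved slice-based complement of an NBW. States are undecorated
slices (`Sum.inl`) and decorated slices (`Sum.inr`); the empty slice `⊥` is
represented as the decorated `Sum.inr []`. Accepting states are the decorated
reset slices. -/
noncomputable def sliceComplement {A Q : Type*} (M : NBW A Q) :
    NBW A (List (Set Q) ⊕ DSlice Q) where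
  init := Sum.inl [{M.init}]
  trans := fun s a =>
    match s with
    | Sum.inl u =>
      {t | t = (match duSucc M.trans M.acc u a with
                | [] => Sum.inr ([] : DSlice Q)
                | l => Sum.inl l)} ∪
      {t | ¬ Doomed (dgSucc M.trans M.acc u a) ∧
           t = Sum.inr (dmerge (dgSucc M.trans M.acc u a))}
    | Sum.inr d =>
      match d with
      | [] => {Sum.inr ([] : DSlice Q)}
      | d => {t | ¬ Doomed (ddSucc M.trans M.acc d a) ∧
                  t = Sum.inr (dmerge (ddSucc M.trans M.acc d a))}
  acc := {s | ∃ d : DSlice Q, s = Sum.inr d ∧ ∀ x ∈ d, x.2 ≠ Dec.zero}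

/-- The levels (slices) of the reduced split tree of `M` on `w`. -/
noncomputable def uSlices {A Q : Type*} (M : NBW A Q) (w : ℕ → A) : ℕ → List (Set Q)
  | 0 => [{M.init}]
  | n + 1 => duSucc M.trans M.acc (uSlices M w n) (w n)

/-!
If `w` has no run, then by Kőnig's lemma (`Q` is finite) there is a level `n` at which no
state of `M` is reachable on `w`. The nodes of the `n`-th slice of the reduced split tree
partition exactly the states reachable at level `n` and are never empty, so the tree has
become `⊥` by then. Up to the first such level the complement follows `δ_u` through
undecorated slices; after it, it stays in `⊥`, which loops and is accepting.
-/

namespace NBW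

variable {A Q : Type*} (M : NBW A Q) (w : ℕ → A)

/-- Runs on the prefix `w 0 ⋯ w (n - 1)`, given by their `n + 1` states. -/
def RunPrefix (n : ℕ) : Type _ :=
  {ρ : Fin (n + 1) → Q //
    ρ 0 = M.init ∧ ∀ i : Fin n, ρ i.succ ∈ M.trans (ρ i.castSucc) (w i)}

instance [Finite Q] (n : ℕ) : Finite (M.RunPrefix w n) := Subtype.finite

variable {M w}

def RunPrefix.restrict {m n : ℕ} (h : m ≤ n) (ρ : M.RunPrefix w n) : M.RunPrefix w m :=
  ⟨fun k => ρ.1 (Fin.castLE (by omega) k), by simpa using ρ.2.1,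
    fun i => by simpa using ρ.2.2 (Fin.castLE h i)⟩

variable (M w)

theorem exists_isRun_of_forall_nonempty_runPrefix [Finite Q]
    (h : ∀ n, Nonempty (M.RunPrefix w n)) : ∃ ρ, M.IsRun w ρ := by
  obtain ⟨f, hf⟩ := exists_seq_forall_proj_of_forall_finite (α := M.RunPrefix w)
    (fun hij ρ => ρ.restrict hij) (fun _ _ => rfl) (fun _ _ _ _ _ _ => rfl)
    (fun _ _ => Set.toFinite _)
  refine ⟨fun n => (f n).1 (Fin.last n), (f 0).2.1, fun n => ?_⟩
  have hprev : (f (n + 1)).1 (Fin.last n).castSucc = (f n).1 (Fin.last n) :=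
    congrArg (fun ρ => ρ.1 (Fin.last n)) (hf n.le_succ)
  change (f (n + 1)).1 (Fin.last (n + 1)) ∈ M.trans ((f n).1 (Fin.last n)) (w n)
  rw [← hprev]
  exact (f (n + 1)).2.2 (Fin.last n)

def reach (n : ℕ) : Set Q := Set.range fun ρ : M.RunPrefix w n => ρ.1 (Fin.last n)

theorem reach_zero : M.reach w 0 = {M.init} := by
  ext q
  constructor
  · rintro ⟨ρ, rfl⟩
    exact ρ.2.1
  · rintro rfl
    exact ⟨⟨fun _ => M.init, rfl, fun i => i.elim0⟩, rfl⟩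

theorem reach_succ (n : ℕ) : M.reach w (n + 1) = ⋃ q ∈ M.reach w n, M.trans q (w n) := by
  ext q
  simp only [Set.mem_iUnion, exists_prop]
  constructor
  · rintro ⟨ρ, rfl⟩
    exact ⟨_, ⟨ρ.restrict n.le_succ, rfl⟩, ρ.2.2 (Fin.last n)⟩
  · rintro ⟨p, ⟨ρ, rfl⟩, hq⟩
    refine ⟨⟨Fin.snoc ρ.1 q, by simpa using ρ.2.1, Fin.lastCases ?_ fun i => ?_⟩, by simp⟩
    · simpa using hq
    · rw [Fin.succ_castSucc, Fin.snoc_castSucc, Fin.snoc_castSucc]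
      exact ρ.2.2 i

theorem exists_reach_eq_empty [Finite Q] (h : ¬ ∃ ρ, M.IsRun w ρ) :
    ∃ n, M.reach w n = ∅ := by
  by_contra! hne
  exact h <| M.exists_isRun_of_forall_nonempty_runPrefix w fun n =>
    Set.range_nonempty_iff_nonempty.1 (hne n)

theorem accepting_of_eventually_eq {ρ : ℕ → Q} {q : Q} {i : ℕ}
    (hq : q ∈ M.acc) (h : ∀ j ≥ i, ρ j = q) : M.Accepting ρ :=
  ⟨q, hq, fun N => ⟨max N i, le_max_left N i, h _ (le_max_right N i)⟩⟩

end NBW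

section Slices

variable {A Q : Type*}

theorem List.eq_nil_iff_biUnion_eq_empty {l : List (Set Q)} (h : ∀ S ∈ l, S.Nonempty) :
    l = [] ↔ ⋃ S ∈ l, S = ∅ := by
  refine ⟨fun hl => by simp [hl], fun hU => List.eq_nil_iff_forall_not_mem.2 fun S hS => ?_⟩
  obtain ⟨q, hq⟩ := h S hS
  exact (Set.eq_empty_iff_forall_notMem.1 hU) q (Set.mem_biUnion hS hq)

theorem biUnion_duAux (δ : Q → A → Set Q) (F : Set Q) (a : A) :
    ∀ (l : List (Set Q)) (seen : Set Q),
      ⋃ S ∈ duAux δ F a l seen, S = (⋃ S ∈ l, ⋃ q ∈ S, δ q a) \ seen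
  | [], seen => by simp [duAux]
  | S :: l, seen => by
    ext q
    simp only [duAux, List.mem_cons, Set.iUnion_iUnion_eq_or_left, biUnion_duAux δ F a l]
    simp only [Set.mem_union, Set.mem_sdiff, Set.mem_inter_iff]
    tauto

theorem biUnion_duSucc (δ : Q → A → Set Q) (F : Set Q) (s : List (Set Q)) (a : A) :
    ⋃ S ∈ duSucc δ F s a, S = ⋃ S ∈ s, ⋃ q ∈ S, δ q a := by
  rw [← Set.sdiff_empty (s := ⋃ S ∈ s, ⋃ q ∈ S, δ q a), ← biUnion_duAux δ F a s ∅]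
  ext q
  simp only [duSucc, Set.mem_iUnion, List.mem_filter, exists_prop]
  exact ⟨fun ⟨S, ⟨hS, _⟩, hq⟩ => ⟨S, hS, hq⟩,
    fun ⟨S, hS, hq⟩ => ⟨S, ⟨hS, by simpa using ⟨q, hq⟩⟩, hq⟩⟩

theorem nonempty_of_mem_duSucc {δ : Q → A → Set Q} {F : Set Q} {s : List (Set Q)} {a : A}
    {S : Set Q} (hS : S ∈ duSucc δ F s a) : S.Nonempty := by
  simpa using (List.mem_filter.1 hS).2

end Slices

section SplitTree

variable {A Q : Type*} (M : NBW A Q) (w : ℕ → A)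

theorem biUnion_uSlices : ∀ n, ⋃ S ∈ uSlices M w n, S = M.reach w n
  | 0 => by simp [uSlices, NBW.reach_zero]
  | n + 1 => by
    ext q
    simp [uSlices, biUnion_duSucc, NBW.reach_succ, ← biUnion_uSlices n]

theorem nonempty_of_mem_uSlices : ∀ {n : ℕ} {S : Set Q}, S ∈ uSlices M w n → S.Nonempty
  | 0, _, hS => by
    rw [uSlices, List.mem_singleton] at hS
    exact hS ▸ Set.singleton_nonempty M.init
  | _ + 1, _, hS => nonempty_of_mem_duSucc hS

theorem uSlices_eq_nil_iff (n : ℕ) : uSlices M w n = [] ↔ M.reach w n = ∅ := by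
  rw [List.eq_nil_iff_biUnion_eq_empty (fun _ => nonempty_of_mem_uSlices M w), biUnion_uSlices]

end SplitTree

section Complement

variable {A Q : Type*} (M : NBW A Q)

theorem sliceComplement_inl_mem_trans {u : List (Set Q)} {a : A}
    (h : duSucc M.trans M.acc u a ≠ []) :
    Sum.inl (duSucc M.trans M.acc u a) ∈ (sliceComplement M).trans (Sum.inl u) a := by
  left
  show _ = match duSucc M.trans M.acc u a with | [] => _ | l => _
  split
  · contradiction
  · rfl

theorem sliceComplement_bot_mem_trans_inl {u : List (Set Q)} {a : A}
    (h : duSucc M.trans M.acc u a = []) :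
    Sum.inr [] ∈ (sliceComplement M).trans (Sum.inl u) a := by
  left
  show _ = match duSucc M.trans M.acc u a with | [] => _ | l => _
  rw [h]

theorem sliceComplement_bot_mem_trans_bot (a : A) :
    Sum.inr [] ∈ (sliceComplement M).trans (Sum.inr []) a :=
  rfl

theorem sliceComplement_bot_mem_acc : Sum.inr [] ∈ (sliceComplement M).acc :=
  ⟨[], rfl, by simp⟩

theorem isRun_sliceComplement_uSlices_then_bot (w : ℕ → A) {i : ℕ}
    (hi : uSlices M w i = []) (hmin : ∀ j < i, uSlices M w j ≠ []) :
    (sliceComplement M).IsRun w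
      (fun j => if j < i then Sum.inl (uSlices M w j) else Sum.inr ([] : DSlice Q)) := by
  have hi0 : 0 < i := Nat.pos_of_ne_zero fun h => by simp [h, uSlices] at hi
  refine ⟨if_pos hi0, fun j => ?_⟩
  by_cases hj1 : j + 1 < i
  · simp only [hj1, (Nat.lt_succ_self j).trans hj1, if_true]
    exact sliceComplement_inl_mem_trans M (hmin _ hj1)
  by_cases hj : j < i
  · simp only [hj1, hj, if_true, if_false]
    exact sliceComplement_bot_mem_trans_inl M (by rwa [← show j + 1 = i by omega] at hi)
  · simp only [hj1, hj, if_false]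
    exact sliceComplement_bot_mem_trans_bot M (w j)

end Complement

/-- If `w` has no run at all in `M`, then the reduced split tree eventually
becomes the empty slice `⊥`, and the run following the undecorated evolution
until `⊥` and then staying in `⊥` forever is an accepting run of the improved
slice-based complement; hence `w ∈ L(A')`. -/
theorem stmt15 {A Q : Type*} [Fintype Q] (M : NBW A Q) (w : ℕ → A)
    (hnorun : ¬ ∃ ρ : ℕ → Q, M.IsRun w ρ) :
    (∃ i : ℕ, uSlices M w i = [] ∧
      (sliceComplement M).IsRun w
        (fun j => if j < i then Sum.inl (uSlices M w j) else Sum.inr ([] : DSlice Q)) ∧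
      (sliceComplement M).Accepting
        (fun j => if j < i then Sum.inl (uSlices M w j) else Sum.inr ([] : DSlice Q))) ∧
    w ∈ (sliceComplement M).Lang := by
  have hnil : ∃ n, uSlices M w n = [] := by
    obtain ⟨n, hn⟩ := M.exists_reach_eq_empty w hnorun
    exact ⟨n, (uSlices_eq_nil_iff M w n).2 hn⟩
  have hrun := isRun_sliceComplement_uSlices_then_bot M w (Nat.find_spec hnil)
    fun _ => Nat.find_min hnil
  have hacc : (sliceComplement M).Accepting
      (fun j => if j < Nat.find hnil then Sum.inl (uSlices M w j) else Sum.inr []) :=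
    (sliceComplement M).accepting_of_eventually_eq (sliceComplement_bot_mem_acc M)
      fun j hj => if_neg (Nat.not_lt.2 hj)
  exact ⟨⟨Nat.find hnil, Nat.find_spec hnil, hrun, hacc⟩, _, hrun, hacc⟩
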